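/- arXiv:2305.09232 — 2 statements merged into one kernel-verified Lean document; each statement's English description precedes it below -/
import Mathlib

section
/- Let (B, L, θ) be a Boolean dynamical system and suppose that either B = {∅}, or B ∖ {∅} is the only maximal tail of (B, L, θ). Then S(H(A)) = B for every nonempty A ∈ B. -/
namespace BoolDyn

variable {X L : Type*}

section Defs

variable [GeneralizedBooleanAlgebra X]

/-- A map `X → X` is an action on the generalized Boolean algebra `X` if it preserves
`⊥`, `⊔`, `⊓` and `\`. -/
def IsBoolAction (f : X → X) : Prop :=
  f ⊥ = ⊥ ∧ (∀ a b : X, f (a ⊔ b) = f a ⊔ f b) ∧ (∀ a b : X, f (a ⊓ b) = f a ⊓ f b) ∧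
    ∀ a b : X, f (a \ b) = f a \ f b

/-- `θ_β := θ_{β_n} ∘ ⋯ ∘ θ_{β_1}` for a word `β = β_1 ⋯ β_n ∈ L^*`, with `θ_∅ = id`. -/
def thetaWord (θ : L → X → X) (β : List L) (a : X) : X :=
  β.foldl (fun x α => θ α x) a

/-- `Δ_a := {α ∈ L : θ_α(a) ≠ ∅}`. -/
def Delta (θ : L → X → X) (a : X) : Set L := {α : L | θ α a ≠ ⊥}

/-- `a` is regular if `0 < |Δ_b| < ∞` for every nonempty `b ⊆ a`. -/
def IsRegularElem (θ : L → X → X) (a : X) : Prop :=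
  ∀ b : X, b ≤ a → b ≠ ⊥ → (Delta θ b).Finite ∧ (Delta θ b).Nonempty

/-- `B_reg`, the set of regular elements. -/
def regSet (θ : L → X → X) : Set X := {a : X | IsRegularElem θ a}

/-- An ideal of a generalized Boolean algebra: a nonempty subset closed under `⊔` and
downward closed under `≤`. -/
structure IsIdeal (I : Set X) : Prop where
  nonempty : I.Nonempty
  sup_mem : ∀ ⦃a b : X⦄, a ∈ I → b ∈ I → a ⊔ b ∈ I
  lower : ∀ ⦃a b : X⦄, a ∈ I → b ≤ a → b ∈ I

/-- A hereditary subset: closed under all the actions. -/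
def Hereditary (θ : L → X → X) (H : Set X) : Prop := ∀ a ∈ H, ∀ α : L, θ α a ∈ H

/-- Saturated: `a ∈ H` whenever `a` is regular and `θ_α(a) ∈ H` for every `α ∈ Δ_a`. -/
def Saturated (θ : L → X → X) (H : Set X) : Prop :=
  ∀ a : X, IsRegularElem θ a → (∀ α ∈ Delta θ a, θ α a ∈ H) → a ∈ H

/-- `J`-saturated: `a ∈ H` whenever `a ∈ J` and `θ_α(a) ∈ H` for every `α ∈ Δ_a`. -/
def JSaturated (θ : L → X → X) (J H : Set X) : Prop :=
  ∀ a ∈ J, (∀ α ∈ Delta θ a, θ α a ∈ H) → a ∈ H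

/-- A cycle: `β` nonempty, `a ≠ ∅`, and `θ_β(b) = b` for every `b ⊆ a`. -/
def IsCycle (θ : L → X → X) (β : List L) (a : X) : Prop :=
  β ≠ [] ∧ a ≠ ⊥ ∧ ∀ b : X, b ≤ a → thetaWord θ β b = b

/-- `(β, a)` has no exits: for every `t ∈ {1,…,n}` and every nonempty `b ⊆ θ_{β_{1,t}}(a)`,
`b` is regular and `Δ_b = {β_{t+1}}` (with `β_{n+1} := β_1`). -/
def NoExits (θ : L → X → X) (β : List L) (a : X) : Prop :=
  ∀ t : ℕ, 1 ≤ t → t ≤ β.length →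
    ∀ b : X, b ≤ thetaWord θ (β.take t) a → b ≠ ⊥ →
      IsRegularElem θ b ∧ Delta θ b = {α : L | β[t % β.length]? = some α}

/-- Condition (L): there is no cycle with no exits. -/
def CondL (θ : L → X → X) : Prop :=
  ¬ ∃ (β : List L) (a : X), IsCycle θ β a ∧ NoExits θ β a

/-- A filter of a generalized Boolean algebra. -/
structure IsBoolFilter (F : Set X) : Prop where
  nonempty : F.Nonempty
  bot_not_mem : ⊥ ∉ F
  inf_mem : ∀ ⦃a b : X⦄, a ∈ F → b ∈ F → a ⊓ b ∈ F
  upper : ∀ ⦃a b : X⦄, a ∈ F → a ≤ b → b ∈ F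

/-- An ultrafilter: a maximal filter. -/
def IsUltra (F : Set X) : Prop :=
  IsBoolFilter F ∧ ∀ G : Set X, IsBoolFilter G → F ⊆ G → G = F

/-- A filter of the ideal `I`, viewed as a generalized Boolean algebra in its own right. -/
structure IsFilterOn (I F : Set X) : Prop where
  subset : F ⊆ I
  nonempty : F.Nonempty
  bot_not_mem : ⊥ ∉ F
  inf_mem : ∀ ⦃a b : X⦄, a ∈ F → b ∈ F → a ⊓ b ∈ F
  upper : ∀ a b : X, a ∈ F → b ∈ I → a ≤ b → b ∈ F

/-- An ultrafilter of the ideal `I`: a maximal filter of `I`. -/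
def IsUltraOn (I F : Set X) : Prop :=
  IsFilterOn I F ∧ ∀ G : Set X, IsFilterOn I G → F ⊆ G → G = F

/-- `R_α := {a ∈ B : a ≤ θ_α(c) for some c ∈ B}`. -/
def Rset (θ : L → X → X) (α : L) : Set X := {a : X | ∃ c : X, a ≤ θ α c}

/-- `β^k`, the `k`-fold concatenation of the word `β`. -/
def wordPow (β : List L) : ℕ → List L
  | 0 => []
  | k + 1 => β ++ wordPow β k

/-- An ultrafilter cycle. -/
def UltrafilterCycle (θ : L → X → X) (β : List L) (η : Set X) : Prop :=
  β ≠ [] ∧ IsUltra η ∧ ∀ a ∈ η, thetaWord θ β a ∈ η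

/-- A maximal tail. -/
structure MaximalTail (θ : L → X → X) (T : Set X) : Prop where
  nonempty : T.Nonempty
  not_bot_mem : ⊥ ∉ T
  t2 : ∀ (a : X) (α : L), θ α a ∈ T → a ∈ T
  t3 : ∀ a b : X, a ⊔ b ∈ T → a ∈ T ∨ b ∈ T
  t4 : ∀ a b : X, a ∈ T → a ≤ b → b ∈ T
  t5 : ∀ a : X, a ∈ T → IsRegularElem θ a → ∃ α : L, θ α a ∈ T
  t6 : ∀ a b : X, a ∈ T → b ∈ T →
    ∃ β γ : List L, thetaWord θ β a ⊓ thetaWord θ γ b ∈ T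

/-- A cyclic (maximal) tail. -/
def CyclicTail (θ : L → X → X) (T : Set X) : Prop :=
  ∃ (β : List L) (η : Set X), UltrafilterCycle θ β η ∧
    T = {b : X | ∃ γ : List L, thetaWord θ γ b ∈ η} ∧
    ∃ A ∈ η, ∀ γ : List L, γ ≠ [] → ∀ b : X, b ≤ A → thetaWord θ γ b ∈ η →
      b ∈ η ∧ ∃ k : ℕ, 0 < k ∧ γ = wordPow β k

/-- Condition (K). -/
def CondK (θ : L → X → X) : Prop :=
  ¬ ∃ (β : List L) (η : Set X) (A : X), UltrafilterCycle θ β η ∧ A ∈ η ∧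
    ∀ γ : List L, γ ≠ [] → ∀ b : X, b ≤ A → thetaWord θ γ b ∈ η →
      b ∈ η ∧ ∃ k : ℕ, 0 < k ∧ γ = wordPow β k

/-- `H(A) = {b : b ≤ ⋃_{β ∈ F} θ_β(A) for some finite F ⊆ L^*}`. -/
def HA (θ : L → X → X) (A : X) : Set X :=
  {b : X | ∃ F : Finset (List L), b ≤ F.sup fun β => thetaWord θ β A}

/-- `I₁ ⊕ I₂`, the smallest ideal containing the ideals `I₁` and `I₂`. -/
def oplus (I₁ I₂ : Set X) : Set X := {c : X | ∃ a ∈ I₁, ∃ b ∈ I₂, c = a ⊔ b}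

/-- `S(H(A))`. -/
def SHA (θ : L → X → X) (A : X) : Set X :=
  {b : X | ∃ n : ℕ, (∀ β : List L, β.length = n → thetaWord θ β b ∈ HA θ A) ∧
    ∀ γ : List L, γ.length < n → thetaWord θ γ b ∈ oplus (HA θ A) (regSet θ)}

/-- Minimality: `{∅}` and `B` are the only saturated hereditary ideals. -/
def Minimal (θ : L → X → X) : Prop :=
  ∀ H : Set X, IsIdeal H → Hereditary θ H → Saturated θ H → H = {⊥} ∨ H = Set.univ

end Defs

end BoolDyn

open BoolDyn


/-!
The set `S(H(A))` is a hereditary saturated ideal containing `A`. Conversely, every element `b`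
outside a hereditary saturated ideal `I` lies in a maximal tail disjoint from `I`: starting from a
prime ideal `J₀ ⊇ I` avoiding `b` (prime ideal theorem), one builds prime ideals `Jₙ ⊇ I` such
that, whenever `Jₙ` misses a regular element, some `θ_α` maps the complement of `Jₙ` into the
complement of `Jₙ₊₁` (saturation of `I` provides `α`). The set of all `a` with
`θ_γ(a) ∉ Jₙ` for some `n` and `γ` is then a maximal tail. If `B ∖ {∅}` is the only maximal tail,
such a tail contains `A`, so no `b` lies outside `S(H(A))`.
-/

namespace BoolDyn

variable {X L : Type*}

section ThetaWord

variable {θ : L → X → X}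

@[simp]
theorem thetaWord_nil (a : X) : thetaWord θ [] a = a := rfl

@[simp]
theorem thetaWord_cons (α : L) (β : List L) (a : X) :
    thetaWord θ (α :: β) a = thetaWord θ β (θ α a) := rfl

theorem thetaWord_append (β γ : List L) (a : X) :
    thetaWord θ (β ++ γ) a = thetaWord θ γ (thetaWord θ β a) :=
  List.foldl_append

theorem Hereditary.thetaWord_mem {I : Set X} (hI : Hereditary θ I) {a : X}
    (ha : a ∈ I) (γ : List L) : thetaWord θ γ a ∈ I := by
  induction γ generalizing a with
  | nil => exact ha
  | cons α γ ih => exact ih (hI a ha α)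

end ThetaWord

variable [GeneralizedBooleanAlgebra X]

namespace IsBoolAction

variable {f : X → X} (hf : IsBoolAction f)
include hf

theorem map_bot : f ⊥ = ⊥ := hf.1

theorem map_sup (a b : X) : f (a ⊔ b) = f a ⊔ f b := hf.2.1 a b

def toSupBotHom : SupBotHom X X where
  toFun := f
  map_sup' := hf.map_sup
  map_bot' := hf.map_bot

theorem monotone : Monotone f := OrderHomClass.mono hf.toSupBotHom

theorem map_finset_sup {ι : Type*} (s : Finset ι) (g : ι → X) :
    f (s.sup g) = s.sup (f ∘ g) :=
  _root_.map_finset_sup hf.toSupBotHom s g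

end IsBoolAction

section ThetaWordHom

variable {θ : L → X → X} (hθ : ∀ α, IsBoolAction (θ α))
include hθ

theorem thetaWord_bot (β : List L) : thetaWord θ β (⊥ : X) = ⊥ := by
  induction β with
  | nil => rfl
  | cons α β ih => rw [thetaWord_cons, (hθ α).map_bot, ih]

theorem thetaWord_sup (β : List L) (a b : X) :
    thetaWord θ β (a ⊔ b) = thetaWord θ β a ⊔ thetaWord θ β b := by
  induction β generalizing a b with
  | nil => rfl
  | cons α β ih => simp only [thetaWord_cons, (hθ α).map_sup, ih]

theorem thetaWord_mono (β : List L) : Monotone (thetaWord θ β) := by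
  induction β with
  | nil => exact monotone_id
  | cons α β ih => exact ih.comp (hθ α).monotone

end ThetaWordHom

namespace IsIdeal

variable {I J : Set X}

theorem bot_mem (hI : IsIdeal I) : ⊥ ∈ I :=
  hI.nonempty.elim fun _ ha => hI.lower ha bot_le

theorem oplus (hI : IsIdeal I) (hJ : IsIdeal J) : IsIdeal (BoolDyn.oplus I J) where
  nonempty := ⟨⊥, ⊥, hI.bot_mem, ⊥, hJ.bot_mem, (sup_bot_eq ⊥).symm⟩
  sup_mem := by
    rintro _ _ ⟨a, ha, b, hb, rfl⟩ ⟨c, hc, d, hd, rfl⟩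
    exact ⟨a ⊔ c, hI.sup_mem ha hc, b ⊔ d, hJ.sup_mem hb hd, sup_sup_sup_comm a b c d⟩
  lower := by
    rintro _ c ⟨a, ha, b, hb, rfl⟩ hc
    refine ⟨c ⊓ a, hI.lower ha inf_le_right, c ⊓ b, hJ.lower hb inf_le_right, ?_⟩
    rw [← inf_sup_left, inf_eq_left.2 hc]

theorem subset_oplus_left (hJ : IsIdeal J) : I ⊆ BoolDyn.oplus I J :=
  fun a ha => ⟨a, ha, ⊥, hJ.bot_mem, (sup_bot_eq a).symm⟩

theorem subset_oplus_right (hI : IsIdeal I) : J ⊆ BoolDyn.oplus I J :=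
  fun b hb => ⟨⊥, hI.bot_mem, b, hb, (bot_sup_eq b).symm⟩

theorem isIdeal_order (hI : IsIdeal I) : Order.IsIdeal I where
  IsLowerSet _ _ hba ha := hI.lower ha hba
  Nonempty := hI.nonempty
  Directed a ha b hb := ⟨a ⊔ b, hI.sup_mem ha hb, le_sup_left, le_sup_right⟩

end IsIdeal

section Regular

variable {θ : L → X → X} (hθ : ∀ α, IsBoolAction (θ α))
include hθ

theorem delta_bot : Delta θ (⊥ : X) = ∅ := by
  ext α
  simp [Delta, (hθ α).map_bot]

theorem delta_mono : Monotone (Delta θ) := fun _ _ hab _ hα hbot =>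
  hα (le_bot_iff.1 (hbot ▸ (hθ _).monotone hab))

theorem delta_sup (a b : X) : Delta θ (a ⊔ b) = Delta θ a ∪ Delta θ b := by
  ext α
  simp only [Delta, Set.mem_ofPred_eq, Set.mem_union, (hθ α).map_sup, ne_eq, sup_eq_bot_iff,
    not_and_or]

theorem IsRegularElem.finite_delta {a c : X} (ha : IsRegularElem θ a) (hc : c ≤ a) :
    (Delta θ c).Finite := by
  rcases eq_or_ne c ⊥ with rfl | hc₀
  · rw [delta_bot hθ]
    exact Set.finite_empty
  · exact (ha c hc hc₀).1

theorem isIdeal_regSet : IsIdeal (regSet θ) where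
  nonempty := ⟨⊥, fun _ hb hb₀ => absurd (le_bot_iff.1 hb) hb₀⟩
  sup_mem a b ha hb c hc hc₀ := by
    have hsplit : c = c ⊓ a ⊔ c ⊓ b := by rw [← inf_sup_left, inf_eq_left.2 hc]
    rw [hsplit, delta_sup hθ]
    refine ⟨(ha.finite_delta hθ inf_le_right).union (hb.finite_delta hθ inf_le_right), ?_⟩
    by_cases hca : c ⊓ a = ⊥
    · have hcb : c ⊓ b ≠ ⊥ := fun hcb => hc₀ (by rw [hsplit, hca, hcb, sup_bot_eq])
      exact (hb _ inf_le_right hcb).2.inr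
    · exact (ha _ inf_le_right hca).2.inl
  lower _ _ ha hba c hc := ha c (hc.trans hba)

end Regular

section SHA

variable {θ : L → X → X} (hθ : ∀ α, IsBoolAction (θ α)) {A : X}

theorem self_mem_HA : A ∈ HA θ A := ⟨{[]}, by simp⟩

theorem isIdeal_HA : IsIdeal (HA θ A) where
  nonempty := ⟨A, self_mem_HA⟩
  sup_mem := by
    classical
    rintro b c ⟨F, hF⟩ ⟨G, hG⟩
    exact ⟨F ∪ G, by rw [Finset.sup_union]; exact sup_le_sup hF hG⟩
  lower := by
    rintro b c ⟨F, hF⟩ hcb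
    exact ⟨F, hcb.trans hF⟩

include hθ

theorem hereditary_HA : Hereditary θ (HA θ A) := by
  classical
  rintro b ⟨F, hF⟩ α
  refine ⟨F.image (· ++ [α]), ?_⟩
  rw [Finset.sup_image]
  calc θ α b ≤ θ α (F.sup fun β => thetaWord θ β A) := (hθ α).monotone hF
    _ = _ := by
      rw [(hθ α).map_finset_sup]
      exact Finset.sup_congr rfl fun β _ => by simp [thetaWord_append]

/-- The length conditions relax because `H(A)` is hereditary and `H(A) ⊆ H(A) ⊕ B_reg`. -/
theorem mem_SHA_iff {b : X} :
    b ∈ SHA θ A ↔ ∃ n : ℕ, (∀ β : List L, n ≤ β.length → thetaWord θ β b ∈ HA θ A) ∧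
      ∀ γ : List L, thetaWord θ γ b ∈ oplus (HA θ A) (regSet θ) := by
  constructor
  · rintro ⟨n, hlong, hshort⟩
    have hHA : ∀ β : List L, n ≤ β.length → thetaWord θ β b ∈ HA θ A := by
      intro β hβ
      rw [← List.take_append_drop n β, thetaWord_append]
      exact (hereditary_HA hθ).thetaWord_mem (hlong _ (List.length_take_of_le hβ)) _
    refine ⟨n, hHA, fun γ => ?_⟩
    rcases lt_or_ge γ.length n with h | h
    · exact hshort γ h
    · exact (isIdeal_regSet hθ).subset_oplus_left (hHA γ h)
  · rintro ⟨n, hHA, hoplus⟩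
    exact ⟨n, fun β hβ => hHA β hβ.ge, fun γ _ => hoplus γ⟩

theorem self_mem_SHA : A ∈ SHA θ A :=
  (mem_SHA_iff hθ).2 ⟨0, fun β _ => (hereditary_HA hθ).thetaWord_mem self_mem_HA β,
    fun γ => (isIdeal_regSet hθ).subset_oplus_left
      ((hereditary_HA hθ).thetaWord_mem self_mem_HA γ)⟩

theorem isIdeal_SHA : IsIdeal (SHA θ A) where
  nonempty := ⟨A, self_mem_SHA hθ⟩
  sup_mem b c hb hc := by
    obtain ⟨n, hbHA, hbO⟩ := (mem_SHA_iff hθ).1 hb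
    obtain ⟨m, hcHA, hcO⟩ := (mem_SHA_iff hθ).1 hc
    refine (mem_SHA_iff hθ).2 ⟨max n m, fun β hβ => ?_, fun γ => ?_⟩
    · rw [thetaWord_sup hθ]
      exact isIdeal_HA.sup_mem (hbHA β (le_of_max_le_left hβ)) (hcHA β (le_of_max_le_right hβ))
    · rw [thetaWord_sup hθ]
      exact (isIdeal_HA.oplus (isIdeal_regSet hθ)).sup_mem (hbO γ) (hcO γ)
  lower b c hb hcb := by
    obtain ⟨n, hbHA, hbO⟩ := (mem_SHA_iff hθ).1 hb
    refine (mem_SHA_iff hθ).2 ⟨n, fun β hβ => ?_, fun γ => ?_⟩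
    · exact isIdeal_HA.lower (hbHA β hβ) (thetaWord_mono hθ β hcb)
    · exact (isIdeal_HA.oplus (isIdeal_regSet hθ)).lower (hbO γ) (thetaWord_mono hθ γ hcb)

theorem hereditary_SHA : Hereditary θ (SHA θ A) := by
  intro b hb α
  obtain ⟨n, hHA, hO⟩ := (mem_SHA_iff hθ).1 hb
  exact (mem_SHA_iff hθ).2 ⟨n, fun β hβ => hHA (α :: β) (by rw [List.length_cons]; omega), fun γ => hO (α :: γ)⟩

/-- `θ_α(b) = ∅` off the finite set `Δ_b`, so the bounds `n` for the `θ_α(b)` have a maximum. -/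
theorem saturated_SHA : Saturated θ (SHA θ A) := by
  intro b hreg hΔ
  have hθb : ∀ α, θ α b ∈ SHA θ A := fun α => by
    by_cases hα : α ∈ Delta θ b
    · exact hΔ α hα
    · rw [show θ α b = ⊥ from not_not.1 hα]
      exact (isIdeal_SHA hθ).bot_mem
  choose N hN using fun α => (mem_SHA_iff hθ).1 (hθb α)
  set S := (hreg.finite_delta hθ le_rfl).toFinset
  refine (mem_SHA_iff hθ).2 ⟨S.sup N + 1, ?_, ?_⟩
  · rintro (_ | ⟨α, β⟩) hβ
    · simp at hβ
    by_cases hα : α ∈ Delta θ b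
    · have : N α ≤ S.sup N := Finset.le_sup (by simpa [S] using hα)
      exact (hN α).1 β (by simp only [List.length_cons] at hβ; omega)
    · rw [thetaWord_cons, show θ α b = ⊥ from not_not.1 hα, thetaWord_bot hθ]
      exact isIdeal_HA.bot_mem
  · rintro (_ | ⟨α, γ⟩)
    · exact isIdeal_HA.subset_oplus_right hreg
    · exact (hN α).2 γ

end SHA

section MaximalTail

open Order Ideal

variable {θ : L → X → X}

theorem _root_.Order.Ideal.IsPrime.inf_notMem {P : Type*} [SemilatticeInf P] {J : Ideal P}
    (hJ : J.IsPrime) {a b : P} (ha : a ∉ J) (hb : b ∉ J) : a ⊓ b ∉ J :=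
  fun hab => (hJ.mem_or_mem hab).elim ha hb

theorem _root_.Order.IsPFilter.upperClosure_image {P Q : Type*} [Preorder P] [Preorder Q]
    {F : Set P} (hF : IsPFilter F) {f : P → Q} (hf : Monotone f) :
    IsPFilter (upperClosure (f '' F) : Set Q) := by
  refine IsPFilter.of_def ?_ ?_ fun hxy hx => (upperClosure (f '' F)).upper hxy hx
  · obtain ⟨a, ha⟩ := hF.Nonempty
    exact ⟨f a, subset_upperClosure ⟨a, ha, rfl⟩⟩
  · rintro x hx y hy
    obtain ⟨_, ⟨a, ha, rfl⟩, hax⟩ := mem_upperClosure.1 hx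
    obtain ⟨_, ⟨b, hb, rfl⟩, hby⟩ := mem_upperClosure.1 hy
    obtain ⟨c, hc, hca, hcb⟩ := hF.Directed a ha b hb
    exact ⟨f c, subset_upperClosure ⟨c, hc, rfl⟩, (hf hca).trans hax, (hf hcb).trans hby⟩

theorem _root_.Order.IsPFilter.exists_isPrime_of_disjoint {P : Type*} [DistribLattice P]
    {F : Set P} (hF : IsPFilter F) {I : Ideal P} (hFI : Disjoint F I) :
    ∃ J : Ideal P, J.IsPrime ∧ I ≤ J ∧ Disjoint F J :=
  DistribLattice.prime_ideal_of_disjoint_filter_ideal (F := hF.toPFilter) hFI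

/-- `J'` is a successor of `J` in the chain of prime ideals defining a maximal tail. -/
def TailStep (θ : L → X → X) (J J' : Ideal X) : Prop :=
  ∀ c ∉ J, (∃ δ : List L, thetaWord θ δ c ∉ J') ∧ (IsRegularElem θ c → ∃ α, θ α c ∉ J')

variable (hθ : ∀ α, IsBoolAction (θ α))
include hθ

/-- Otherwise pick, for each of the finitely many `α ∈ Δ_c`, some `c' ∉ J` with `θ_α(c') ∈ I`:
the meet of `c` with these lies outside `J`, but in `I` by saturation. -/
theorem exists_letter_map_compl {I J : Ideal X} (hsat : Saturated θ I) (hJ : J.IsPrime)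
    (hIJ : I ≤ J) {c : X} (hcJ : c ∉ J) (hc : IsRegularElem θ c) :
    ∃ α, ∀ c' ∉ J, θ α c' ∉ I := by
  by_contra! hno
  choose f hfJ hfI using hno
  obtain ⟨hfin, hne⟩ := hc c le_rfl fun h => hcJ (h ▸ J.bot_mem)
  set S := hfin.toFinset
  have hS : S.Nonempty := hne.imp fun α hα => by simpa [S] using hα
  set d := c ⊓ S.inf' hS f
  have hdJ : d ∉ J :=
    hJ.inf_notMem hcJ (Finset.inf'_mem (↑J)ᶜ (fun _ hx _ hy => hJ.inf_notMem hx hy) S hS f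
      fun α _ => hfJ α)
  refine hdJ (hIJ (hsat d (fun b hb => hc b (hb.trans inf_le_left)) fun α hα => ?_))
  have hαS : α ∈ S := by simpa [S] using delta_mono hθ inf_le_left hα
  exact I.lower ((hθ α).monotone (inf_le_right.trans (S.inf'_le f hαS))) (hfI α)

theorem exists_tailStep {I J : Ideal X} (hsat : Saturated θ I) (hJ : J.IsPrime) (hIJ : I ≤ J) :
    ∃ J' : Ideal X, J'.IsPrime ∧ I ≤ J' ∧ TailStep θ J J' := by
  by_cases hreg : ∃ c ∉ J, IsRegularElem θ c
  · obtain ⟨c, hcJ, hc⟩ := hreg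
    obtain ⟨α, hα⟩ := exists_letter_map_compl hθ hsat hJ hIJ hcJ hc
    have hF := hJ.compl_filter.upperClosure_image (hθ α).monotone
    have hFI : Disjoint (upperClosure (θ α '' (↑J)ᶜ) : Set X) I := by
      refine Set.disjoint_left.2 fun d hd hdI => ?_
      obtain ⟨_, ⟨c', hc', rfl⟩, hc'd⟩ := mem_upperClosure.1 hd
      exact hα c' hc' (I.lower hc'd hdI)
    obtain ⟨J', hJ', hIJ', hdisj⟩ := hF.exists_isPrime_of_disjoint hFI
    have hmaps : ∀ c' ∉ J, θ α c' ∉ J' := fun c' hc' =>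
      Set.disjoint_left.1 hdisj (subset_upperClosure ⟨c', hc', rfl⟩)
    exact ⟨J', hJ', hIJ', fun c' hc' => ⟨⟨[α], hmaps c' hc'⟩, fun _ => ⟨α, hmaps c' hc'⟩⟩⟩
  · exact ⟨J, hJ, hIJ, fun c hc => ⟨⟨[], hc⟩, fun h => absurd ⟨c, hc, h⟩ hreg⟩⟩

omit hθ in
theorem TailStep.chain {J : ℕ → Ideal X} (hstep : ∀ n, TailStep θ (J n) (J (n + 1)))
    {n m : ℕ} (hnm : n ≤ m) {c : X} (hc : c ∉ J n) : ∃ δ : List L, thetaWord θ δ c ∉ J m := by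
  induction m, hnm using Nat.le_induction with
  | base => exact ⟨[], hc⟩
  | succ m _ ih =>
    obtain ⟨δ, hδ⟩ := ih
    obtain ⟨δ', hδ'⟩ := (hstep m _ hδ).1
    exact ⟨δ ++ δ', by rwa [thetaWord_append]⟩

theorem maximalTail_of_tailStep {J : ℕ → Ideal X} (hprime : ∀ n, (J n).IsPrime)
    (hstep : ∀ n, TailStep θ (J n) (J (n + 1))) {b : X} (hb : b ∉ J 0) :
    MaximalTail θ {a | ∃ n, ∃ γ : List L, thetaWord θ γ a ∉ J n} where
  nonempty := ⟨b, 0, [], hb⟩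
  not_bot_mem := fun ⟨n, γ, hγ⟩ => hγ (by rw [thetaWord_bot hθ]; exact (J n).bot_mem)
  t2 _ α := fun ⟨n, γ, hγ⟩ => ⟨n, α :: γ, hγ⟩
  t3 a c := fun ⟨n, γ, hγ⟩ => by
    rw [thetaWord_sup hθ] at hγ
    by_cases ha : thetaWord θ γ a ∈ J n
    · exact Or.inr ⟨n, γ, fun hc => hγ (sup_mem ha hc)⟩
    · exact Or.inl ⟨n, γ, ha⟩
  t4 _ _ := fun ⟨n, γ, hγ⟩ hac => ⟨n, γ, fun h => hγ ((J n).lower (thetaWord_mono hθ γ hac) h)⟩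
  t5 a := by
    rintro ⟨n, _ | ⟨α, γ⟩, hγ⟩ hreg
    · obtain ⟨α, hα⟩ := (hstep n a hγ).2 hreg
      exact ⟨α, n + 1, [], hα⟩
    · exact ⟨α, n, γ, hγ⟩
  t6 a a' := by
    rintro ⟨n, γ, hγ⟩ ⟨n', γ', hγ'⟩
    wlog hnn' : n ≤ n' generalizing a a' n n' γ γ'
    · obtain ⟨β, β', hmem⟩ := this a' a n' γ' hγ' n γ hγ (le_of_not_ge hnn')
      exact ⟨β', β, by rwa [inf_comm]⟩
    obtain ⟨δ, hδ⟩ := TailStep.chain hstep hnn' hγ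
    rw [← thetaWord_append] at hδ
    exact ⟨γ ++ δ, γ', n', [], (hprime n').inf_notMem hδ hγ'⟩

theorem exists_maximalTail_disjoint {I : Set X} (hI : IsIdeal I) (hher : Hereditary θ I)
    (hsat : Saturated θ I) {b : X} (hb : b ∉ I) :
    ∃ T : Set X, MaximalTail θ T ∧ Disjoint T I := by
  set I' : Ideal X := hI.isIdeal_order.toIdeal
  have hbI' : Disjoint (PFilter.principal b : Set X) I' :=
    Set.disjoint_left.2 fun d hd hdI => hb (hI.lower hdI (PFilter.mem_principal.1 hd))
  obtain ⟨J₀, hJ₀, hIJ₀, hbJ₀⟩ := (PFilter.principal b).isPFilter.exists_isPrime_of_disjoint hbI'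
  let Q := {J : Ideal X // J.IsPrime ∧ I' ≤ J}
  have hnext : ∀ J : Q, ∃ J' : Q, TailStep θ J.1 J'.1 := fun J =>
    let ⟨J', hJ', hIJ', hstep⟩ := exists_tailStep hθ (I := I') hsat J.2.1 J.2.2
    ⟨⟨J', hJ', hIJ'⟩, hstep⟩
  choose next hnext using hnext
  let seq : ℕ → Q := fun n => next^[n] ⟨J₀, hJ₀, hIJ₀⟩
  have hstep : ∀ n, TailStep θ (seq n).1 (seq (n + 1)).1 := fun n => by
    simp only [seq, Function.iterate_succ_apply']
    exact hnext _
  refine ⟨_, maximalTail_of_tailStep hθ (fun n => (seq n).2.1) hstep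
    (Set.disjoint_left.1 hbJ₀ (PFilter.mem_principal.2 le_rfl)), ?_⟩
  refine Set.disjoint_left.2 fun a haT haI => ?_
  obtain ⟨n, γ, hγ⟩ := haT
  exact hγ ((seq n).2.2 (hher.thetaWord_mem haI γ))

end MaximalTail

end BoolDyn

open BoolDyn

/-- **Statement 14.** If either `B = {∅}` or `B ∖ {∅}` is the only maximal tail, then
`S(H(A)) = B` for every nonempty `A ∈ B`. -/
theorem SHA_eq_univ_of_unique_maximalTail
    {X L : Type*} [GeneralizedBooleanAlgebra X] (θ : L → X → X)
    (hθ : ∀ α : L, IsBoolAction (θ α))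
    (h : (∀ a : X, a = ⊥) ∨
      (MaximalTail θ {a : X | a ≠ ⊥} ∧
        ∀ T : Set X, MaximalTail θ T → T = {a : X | a ≠ ⊥})) :
    ∀ A : X, A ≠ ⊥ → SHA θ A = Set.univ := by
  intro A hA
  rcases h with hbot | ⟨-, hunique⟩
  · exact absurd (hbot A) hA
  by_contra hne
  obtain ⟨b, hb⟩ := (Set.ne_univ_iff_exists_notMem _).1 hne
  obtain ⟨T, hT, hdisj⟩ := exists_maximalTail_disjoint hθ (isIdeal_SHA hθ) (hereditary_SHA hθ)
    (saturated_SHA hθ) hb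
  have hAT : A ∈ T := by rw [hunique T hT]; exact hA
  exact Set.disjoint_left.1 hdisj hAT (self_mem_SHA hθ)
end

section
/- Let (B, L, θ) be a Boolean dynamical system and suppose I is a saturated hereditary ideal of B with I ≠ {∅} and I ≠ B. Then there exist A, B ∈ B with A ≠ ∅ such that no C ∈ B_reg satisfies both B ∖ C ∈ H(A) and the property that for every x ∈ L^∞ there is n ∈ ℕ₀ with θ_{x_{1,n}}(C) ∈ H(A). -/
open BoolDyn

section AuxProof

variable {X L : Type*} [GeneralizedBooleanAlgebra X]

theorem BoolDyn.act_mono {θ : L → X → X} (hθ : ∀ α : L, IsBoolAction (θ α)) (α : L) :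
    Monotone (θ α) := by
  intro a b hab
  have h2 : θ α b = θ α a ⊔ θ α b := by
    conv_lhs => rw [← sup_eq_right.mpr hab]
    exact (hθ α).2.1 a b
  exact le_sup_left.trans h2.ge

omit [GeneralizedBooleanAlgebra X] in
theorem BoolDyn.thetaWord_cons_s13 {θ : L → X → X} (α : L) (β : List L) (a : X) :
    thetaWord θ (α :: β) a = thetaWord θ β (θ α a) := rfl

omit [GeneralizedBooleanAlgebra X] in
theorem BoolDyn.thetaWord_append_s13 {θ : L → X → X} (u v : List L) (a : X) :
    thetaWord θ (u ++ v) a = thetaWord θ v (thetaWord θ u a) := by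
  simp [thetaWord, List.foldl_append]

theorem BoolDyn.thetaWord_mono_s13 {θ : L → X → X} (hθ : ∀ α : L, IsBoolAction (θ α))
    (β : List L) : Monotone (fun a : X => thetaWord θ β a) := by
  induction β with
  | nil => exact fun a b h => h
  | cons α β ih => exact fun a b h => ih (BoolDyn.act_mono hθ α h)

omit [GeneralizedBooleanAlgebra X] in
theorem BoolDyn.thetaWord_mem {θ : L → X → X} {I : Set X} (hher : Hereditary θ I)
    (β : List L) {a : X} (ha : a ∈ I) : thetaWord θ β a ∈ I := by
  induction β generalizing a with
  | nil => exact ha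
  | cons α β ih => exact ih (hher a ha α)

theorem BoolDyn.HA_subset {θ : L → X → X} {I : Set X} (hI : IsIdeal I)
    (hher : Hereditary θ I) {A : X} (hA : A ∈ I) : HA θ A ⊆ I := by
  have hbot : (⊥ : X) ∈ I := by
    obtain ⟨a, ha⟩ := hI.nonempty
    exact hI.lower ha bot_le
  rintro b ⟨F, hF⟩
  refine hI.lower ?_ hF
  exact Finset.sup_induction hbot (fun a ha b hb => hI.sup_mem ha hb)
    (fun β _ => BoolDyn.thetaWord_mem hher β hA)

end AuxProof



/-- **Statement 16.** If `I` is a saturated hereditary ideal with `I ≠ {∅}` and `I ≠ B`, then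
there are `A ≠ ∅` and `b` such that no `C ∈ B_reg` satisfies both `b ∖ C ∈ H(A)` and: for
every `x ∈ L^∞` there is `n` with `θ_{x_{1,n}}(C) ∈ H(A)`. -/
theorem not_minimal_witness
    {X L : Type*} [GeneralizedBooleanAlgebra X] (θ : L → X → X)
    (hθ : ∀ α : L, IsBoolAction (θ α))
    (I : Set X) (hI : IsIdeal I) (hher : Hereditary θ I) (hsat : Saturated θ I)
    (hne : I ≠ {⊥}) (hne' : I ≠ Set.univ) :
    ∃ A b : X, A ≠ ⊥ ∧
      ∀ C ∈ regSet θ, ¬ (b \ C ∈ HA θ A ∧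
        ∀ x : ℕ → L, ∃ n : ℕ, thetaWord θ ((List.range n).map x) C ∈ HA θ A) := by
  by_contra hcon
  push_neg at hcon
  have hbot : (⊥ : X) ∈ I := by
    obtain ⟨a, ha⟩ := hI.nonempty
    exact hI.lower ha bot_le
  obtain ⟨A₀, hA₀I, hA₀ne⟩ : ∃ a ∈ I, a ≠ ⊥ := by
    by_contra h
    push_neg at h
    exact hne (Set.eq_singleton_iff_unique_mem.mpr ⟨hbot, fun a ha => h a ha⟩)
  obtain ⟨d, hd⟩ : ∃ d : X, d ∉ I := by
    by_contra h
    push_neg at h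
    exact hne' (Set.eq_univ_of_forall h)
  have HAsub : HA θ A₀ ⊆ I := BoolDyn.HA_subset hI hher hA₀I
  -- the invariant
  set P : X → Prop := fun e => e ∉ I ∧ IsRegularElem θ e ∧
    ∀ x : ℕ → L, ∃ n : ℕ, thetaWord θ ((List.range n).map x) e ∈ HA θ A₀ with hP
  have key : ∀ b : X, b ∉ I → ∃ e : X, P e ∧ e ≤ b := by
    intro b hb
    obtain ⟨C, hCreg, hdiff, hPC⟩ := hcon A₀ b hA₀ne
    refine ⟨b ⊓ C, ⟨?_, ?_, ?_⟩, inf_le_left⟩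
    · intro hmem
      apply hb
      have : b ⊓ C ⊔ b \ C ∈ I := hI.sup_mem hmem (HAsub hdiff)
      rwa [sup_inf_sdiff] at this
    · intro c hc hcne
      exact hCreg c (hc.trans inf_le_right) hcne
    · intro x
      obtain ⟨n, F, hF⟩ := hPC x
      exact ⟨n, F, le_trans
        (BoolDyn.thetaWord_mono_s13 hθ ((List.range n).map x) inf_le_right) hF⟩
  have step : ∀ e : X, P e → ∃ (α : L) (e' : X), e' ≤ θ α e ∧ P e' := by
    rintro e ⟨heI, hereg, _⟩
    have : ∃ α : L, θ α e ∉ I := by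
      by_contra hall
      push_neg at hall
      exact heI (hsat e hereg fun α _ => hall α)
    obtain ⟨α, hα⟩ := this
    obtain ⟨e', hPe', hle⟩ := key (θ α e) hα
    exact ⟨α, e', hle, hPe'⟩
  obtain ⟨e₀, hP₀, _⟩ := key d hd
  have step' : ∀ s : {e : X // P e}, ∃ p : L × {e : X // P e},
      (p.2 : X) ≤ θ p.1 (s : X) := by
    intro s
    obtain ⟨α, e', hle, hPe'⟩ := step s.1 s.2
    exact ⟨(α, ⟨e', hPe'⟩), hle⟩
  choose f hf using step'
  let g : ℕ → {e : X // P e} := fun n => Nat.rec ⟨e₀, hP₀⟩ (fun _ s => (f s).2) n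
  let x : ℕ → L := fun n => (f (g n)).1
  have hgs : ∀ n : ℕ, ((g (n + 1)).val) ≤ θ (x n) ((g n).val) := by
    intro n
    have e : g (n + 1) = (f (g n)).2 := rfl
    rw [e]
    exact hf (g n)
  have hchain : ∀ n : ℕ, ((g n).val) ≤ thetaWord θ ((List.range n).map x) e₀ := by
    intro n
    induction n with
    | zero => exact le_of_eq rfl
    | succ n ih =>
      rw [List.range_succ, List.map_append, BoolDyn.thetaWord_append_s13]
      calc ((g (n + 1)).val) ≤ θ (x n) ((g n).val) := hgs n
        _ ≤ θ (x n) (thetaWord θ ((List.range n).map x) e₀) :=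
          BoolDyn.act_mono hθ (x n) ih
        _ = thetaWord θ [x n] (thetaWord θ ((List.range n).map x) e₀) := rfl
  obtain ⟨n, hn⟩ := hP₀.2.2 x
  exact (g n).2.1 (hI.lower (HAsub hn) (hchain n))
end
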